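/- Let g* be the quotient map of the equivalence relation x ∼ x′ iff P(Y|X=x) = P(Y|X=x′). If g is any function of X such that X → g(X) → Y is a Markov chain, then g*(X) is a function of g(X) almost surely; consequently H(g*(X)) ≤ H(g(X)). -/

import Mathlib

open scoped Classical
open Finset Real

noncomputable section

variable {Ω : Type*} [Fintype Ω]

/-- Pushforward probability of value `x` under random variable `X` w.r.t. pmf `p`. -/
def dist' {α : Type*} (p : Ω → ℝ) (X : Ω → α) (x : α) : ℝ :=
  ∑ ω, if X ω = x then p ω else 0

/-- Shannon entropy, base 2. -/
def ent {α : Type*} [Fintype α] (p : Ω → ℝ) (X : Ω → α) : ℝ :=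
  -∑ x, dist' p X x * Real.logb 2 (dist' p X x)

/-- Conditional entropy `H(X | Y)`. -/
def condEnt {α β : Type*} [Fintype α] [Fintype β] (p : Ω → ℝ) (X : Ω → α) (Y : Ω → β) : ℝ :=
  ent p (fun ω => (X ω, Y ω)) - ent p Y

/-- Mutual information `I(X ∧ Y)`. -/
def mi {α β : Type*} [Fintype α] [Fintype β] (p : Ω → ℝ) (X : Ω → α) (Y : Ω → β) : ℝ :=
  ent p X + ent p Y - ent p (fun ω => (X ω, Y ω))

/-- Conditional mutual information `I(X ∧ Y | Z)`. -/
def cmi {α β γ : Type*} [Fintype α] [Fintype β] [Fintype γ]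
    (p : Ω → ℝ) (X : Ω → α) (Y : Ω → β) (Z : Ω → γ) : ℝ :=
  ent p (fun ω => (X ω, Z ω)) + ent p (fun ω => (Y ω, Z ω))
    - ent p (fun ω => ((X ω, Y ω), Z ω)) - ent p Z

/-- `p` is a probability mass function on `Ω`. -/
def IsPMF (p : Ω → ℝ) : Prop := (∀ ω, 0 ≤ p ω) ∧ ∑ ω, p ω = 1

/-!
Since `(X, g X)` carries the same information as `X`, the conditional mutual information
`I(X ∧ Y | g X)` is the Kullback–Leibler divergence of the joint law `P(x, y)` from
`P(x) P(y | g x)`. By Gibbs' inequality it vanishes only if `P(y | x) = P(y | g x)` whenever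
`P(x) > 0`. Hence two values of `X` with positive mass and the same image under `g` have the same
conditional law of `Y`, i.e. the same image under `g*`; so `g* = f ∘ g` on the support of `X`,
and entropy does not increase under the map `f`.
-/

open InformationTheory

lemma eq_of_sum_mul_log_div_eq_zero {ι : Type*} [Fintype ι] (a b : ι → ℝ)
    (ha : ∀ i, 0 ≤ a i) (hb : ∀ i, 0 ≤ b i) (hab : ∀ i, b i = 0 → a i = 0)
    (hsum : ∑ i, a i = ∑ i, b i) (h : ∑ i, a i * log (a i / b i) = 0) : a = b := by
  have hterm : ∀ i, b i * klFun (a i / b i) = a i * log (a i / b i) + b i - a i := by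
    intro i
    rcases (hb i).eq_or_lt with hbi | hbi
    · simp [← hbi, hab i hbi.symm]
    · rw [klFun_apply]
      field_simp
  have hnonneg : ∀ i, 0 ≤ b i * klFun (a i / b i) :=
    fun i => mul_nonneg (hb i) (klFun_nonneg (div_nonneg (ha i) (hb i)))
  have hzero : ∑ i, b i * klFun (a i / b i) = 0 := by
    simp only [hterm, sum_sub_distrib, sum_add_distrib, h, hsum]
    ring
  funext i
  have hi := (sum_eq_zero_iff_of_nonneg fun i _ => hnonneg i).mp hzero i (mem_univ i)
  rcases (hb i).eq_or_lt with hbi | hbi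
  · rw [← hbi, hab i hbi.symm]
  · rw [mul_eq_zero, klFun_eq_zero_iff (div_nonneg (ha i) hbi.le),
      div_eq_one_iff_eq hbi.ne'] at hi
    exact hi.resolve_left hbi.ne'

lemma exists_eqOn_comp {α β γ : Type*} [Nonempty γ] {s : Set α} {g : α → β} {h : α → γ}
    (hgh : ∀ x ∈ s, ∀ x' ∈ s, g x = g x' → h x = h x') : ∃ f : β → γ, s.EqOn (f ∘ g) h :=
  ⟨Function.extend (fun x : s => g x) (fun x : s => h x) fun _ => Classical.arbitrary γ,
    fun x hx => Function.FactorsThrough.extend_apply (f := fun x : s => g x)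
      (g := fun x : s => h x) (fun a b hab => hgh a a.2 b b.2 hab) _ ⟨x, hx⟩⟩

section Distribution

variable {α β : Type*} (p : Ω → ℝ)

lemma sum_dist'_mul [Fintype α] (W : Ω → α) (F : α → ℝ) :
    ∑ a, dist' p W a * F a = ∑ ω, p ω * F (W ω) := by
  simp only [dist', sum_mul]
  rw [sum_comm]
  simp [ite_mul]

lemma sum_dist' [Fintype α] (W : Ω → α) : ∑ a, dist' p W a = ∑ ω, p ω := by
  simpa using sum_dist'_mul p W 1

lemma sum_dist'_pair_left [Fintype α] (A : Ω → α) (B : Ω → β) (b : β) :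
    ∑ a, dist' p (fun ω => (A ω, B ω)) (a, b) = dist' p B b := by
  simp only [dist']
  rw [sum_comm]
  refine sum_congr rfl fun ω _ => ?_
  by_cases h : B ω = b <;> simp [h]

lemma dist'_graph (W : Ω → α) (f : α → β) (a : α) :
    dist' p (fun ω => (W ω, f (W ω))) (a, f a) = dist' p W a := by
  refine sum_congr rfl fun ω _ => ?_
  by_cases h : W ω = a <;> simp [h]

variable {p}

lemma dist'_nonneg (hp : ∀ ω, 0 ≤ p ω) (W : Ω → α) (a : α) : 0 ≤ dist' p W a :=
  sum_nonneg fun ω _ => by split <;> simp [hp ω]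

lemma le_dist'_self (hp : ∀ ω, 0 ≤ p ω) (W : Ω → α) (ω : Ω) : p ω ≤ dist' p W (W ω) :=
  single_le_sum (f := fun ω' => if W ω' = W ω then p ω' else 0)
    (fun ω' _ => by split <;> simp [hp ω']) (mem_univ ω) |>.trans_eq' (by simp)

lemma dist'_le_comp (hp : ∀ ω, 0 ≤ p ω) (W : Ω → α) (f : α → β) (a : α) :
    dist' p W a ≤ dist' p (fun ω => f (W ω)) (f a) :=
  sum_le_sum fun ω _ => by split_ifs <;> simp_all

end Distribution

section Entropy

variable {α β : Type*} [Fintype α] {p : Ω → ℝ}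

lemma ent_eq_neg_sum (W : Ω → α) :
    ent p W = -∑ ω, p ω * logb 2 (dist' p W (W ω)) := by
  rw [ent, sum_dist'_mul p W fun a => logb 2 (dist' p W a)]

lemma ent_congr_ae {W W' : Ω → α} (h : ∀ ω, p ω ≠ 0 → W ω = W' ω) : ent p W = ent p W' := by
  have hdist : dist' p W = dist' p W' := funext fun a => sum_congr rfl fun ω _ => by
    by_cases hω : p ω = 0 <;> simp [hω, h]
  rw [ent, ent, hdist]

lemma ent_comp_le [Fintype β] (hp : ∀ ω, 0 ≤ p ω) (f : α → β) (W : Ω → α) :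
    ent p (fun ω => f (W ω)) ≤ ent p W := by
  rw [ent_eq_neg_sum, ent_eq_neg_sum, neg_le_neg_iff]
  refine sum_le_sum fun ω _ => ?_
  rcases (hp ω).eq_or_lt with h | h
  · simp [← h]
  · exact mul_le_mul_of_nonneg_left (logb_le_logb_of_le one_lt_two
      (h.trans_le (le_dist'_self hp W ω)) (dist'_le_comp hp W f (W ω))) h.le

end Entropy

section MarkovChain

variable {𝒳 𝒴 δ : Type*} [Fintype 𝒳] [Fintype 𝒴] [Fintype δ] {p : Ω → ℝ}

lemma cmi_comp_eq_sum (hp : ∀ ω, 0 ≤ p ω) (X : Ω → 𝒳) (Y : Ω → 𝒴) (g : 𝒳 → δ) :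
    cmi p X Y (fun ω => g (X ω)) = ∑ w : 𝒳 × 𝒴, dist' p (fun ω => (X ω, Y ω)) w *
      logb 2 (dist' p (fun ω => (X ω, Y ω)) w / (dist' p X w.1 *
        dist' p (fun ω => (Y ω, g (X ω))) (w.2, g w.1) / dist' p (fun ω => g (X ω)) (g w.1))) := by
  rw [sum_dist'_mul, cmi, ent_eq_neg_sum, ent_eq_neg_sum, ent_eq_neg_sum, ent_eq_neg_sum]
  simp only [← sum_neg_distrib, ← sum_add_distrib, ← sum_sub_distrib]
  refine sum_congr rfl fun ω _ => ?_
  rcases (hp ω).eq_or_lt with h | h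
  · simp [← h]
  have hXY := (h.trans_le (le_dist'_self hp (fun ω => (X ω, Y ω)) ω)).ne'
  have hX := (h.trans_le (le_dist'_self hp X ω)).ne'
  have hYZ := (h.trans_le (le_dist'_self hp (fun ω => (Y ω, g (X ω))) ω)).ne'
  have hZ := (h.trans_le (le_dist'_self hp (fun ω => g (X ω)) ω)).ne'
  rw [dist'_graph p X g, dist'_graph p (fun ω => (X ω, Y ω)) (fun w => g w.1),
    logb_div hXY (div_ne_zero (mul_ne_zero hX hYZ) hZ), logb_div (mul_ne_zero hX hYZ) hZ,
    logb_mul hX hYZ]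
  ring

theorem div_dist'_eq_of_cmi_eq_zero (hp : ∀ ω, 0 ≤ p ω) (X : Ω → 𝒳) (Y : Ω → 𝒴) (g : 𝒳 → δ)
    (hg : cmi p X Y (fun ω => g (X ω)) = 0) (x : 𝒳) (y : 𝒴) (hx : 0 < dist' p X x) :
    dist' p (fun ω => (X ω, Y ω)) (x, y) / dist' p X x
      = dist' p (fun ω => (Y ω, g (X ω))) (y, g x) / dist' p (fun ω => g (X ω)) (g x) := by
  set a := dist' p (fun ω => (X ω, Y ω))
  set b : 𝒳 × 𝒴 → ℝ := fun w => dist' p X w.1 *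
    dist' p (fun ω => (Y ω, g (X ω))) (w.2, g w.1) / dist' p (fun ω => g (X ω)) (g w.1)
  have hX_le_Z : ∀ x, dist' p X x ≤ dist' p (fun ω => g (X ω)) (g x) :=
    dist'_le_comp hp X g
  have hb_sum : ∀ x, ∑ y, b (x, y) = dist' p X x := by
    intro x
    simp only [b, ← sum_div, ← mul_sum, sum_dist'_pair_left]
    rcases (dist'_nonneg hp _ (g x)).eq_or_lt with h | h
    · rw [← h, div_zero]
      exact le_antisymm (dist'_nonneg hp X x) (h ▸ hX_le_Z x)
    · exact mul_div_cancel_right₀ _ h.ne'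
  have hsum : ∑ w, a w = ∑ w, b w := by
    rw [sum_dist', Fintype.sum_prod_type]
    simp only [hb_sum, sum_dist']
  have hab : ∀ w, b w = 0 → a w = 0 := by
    rintro ⟨x, y⟩ hb
    simp only [b, div_eq_zero_iff, mul_eq_zero] at hb
    refine le_antisymm ?_ (dist'_nonneg hp _ _)
    rcases hb with (hb | hb) | hb <;> rw [← hb]
    · exact dist'_le_comp hp (fun ω => (X ω, Y ω)) Prod.fst (x, y)
    · exact dist'_le_comp hp (fun ω => (X ω, Y ω)) (fun w => (w.2, g w.1)) (x, y)
    · exact dist'_le_comp hp (fun ω => (X ω, Y ω)) (fun w => g w.1) (x, y)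
  have hlog : ∑ w, a w * log (a w / b w) = 0 := by
    rw [cmi_comp_eq_sum hp] at hg
    simpa [logb, mul_div_assoc', ← sum_div, (log_pos one_lt_two).ne'] using hg
  have hab_eq := congrFun (eq_of_sum_mul_log_div_eq_zero a b (dist'_nonneg hp _)
    (fun w => div_nonneg (mul_nonneg (dist'_nonneg hp _ _) (dist'_nonneg hp _ _))
      (dist'_nonneg hp _ _)) hab hsum hlog) (x, y)
  rw [hab_eq]
  simp only [b]
  rw [mul_div_assoc, mul_div_cancel_left₀ _ hx.ne']

end MarkovChain

/-- Minimality of `g*`: if `X -∘- g(X) -∘- Y` then `g*(X)` is a.s. a function of `g(X)`,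
and consequently `H(g*(X)) ≤ H(g(X))`. -/
theorem stmt5 {Ω 𝒳 𝒴 γ δ : Type*} [Fintype Ω] [Fintype 𝒳] [Fintype 𝒴] [Fintype γ] [Fintype δ]
    (p : Ω → ℝ) (hp : IsPMF p) (X : Ω → 𝒳) (Y : Ω → 𝒴) (gstar : 𝒳 → γ)
    (hquot : ∀ x x', 0 < dist' p X x → 0 < dist' p X x' →
      (gstar x = gstar x' ↔
        ∀ y, dist' p (fun ω => (X ω, Y ω)) (x, y) / dist' p X x
           = dist' p (fun ω => (X ω, Y ω)) (x', y) / dist' p X x'))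
    (g : 𝒳 → δ) (hg : cmi p X Y (fun ω => g (X ω)) = 0) :
    (∃ f : δ → γ, (∑ ω, if f (g (X ω)) = gstar (X ω) then p ω else 0) = 1) ∧
    ent p (fun ω => gstar (X ω)) ≤ ent p (fun ω => g (X ω)) := by
  obtain ⟨hp0, hp1⟩ := hp
  obtain ⟨ω₀, -, -⟩ := exists_ne_zero_of_sum_ne_zero (hp1.trans_ne one_ne_zero)
  have : Nonempty γ := ⟨gstar (X ω₀)⟩
  obtain ⟨f, hf⟩ := exists_eqOn_comp (s := {x | 0 < dist' p X x}) (g := g) (h := gstar)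
    fun x hx x' hx' hgx => (hquot x x' hx hx').mpr fun y => by
      rw [div_dist'_eq_of_cmi_eq_zero hp0 X Y g hg x y hx,
        div_dist'_eq_of_cmi_eq_zero hp0 X Y g hg x' y hx', hgx]
  have hf_ae : ∀ ω, p ω ≠ 0 → f (g (X ω)) = gstar (X ω) := fun ω hω =>
    hf ((hp0 ω).lt_of_ne' hω |>.trans_le (le_dist'_self hp0 X ω))
  refine ⟨⟨f, ?_⟩, ?_⟩
  · rw [← hp1]
    refine sum_congr rfl fun ω _ => ?_
    by_cases hω : p ω = 0 <;> simp [hω, hf_ae]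
  · rw [ent_congr_ae fun ω hω => (hf_ae ω hω).symm]
    exact ent_comp_le hp0 f fun ω => g (X ω)
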